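/- For the Kummer confluent hypergeometric function ₁F₁(a;c;x) = Σ_{k≥0} (a)_k x^k / [(c)_k k!], with c > 0, δ > 0, x > 0, and 0 < a < b: Γ(a+δ)Γ(b)/[Γ(b+δ)Γ(a)] < ₁F₁(b+δ;c;x)·₁F₁(a;c;x) / [₁F₁(a+δ;c;x)·₁F₁(b;c;x)] < 1. -/

import Mathlib

/-- Pochhammer symbol (rising factorial) for real argument. -/
def poch (a : ℝ) (n : ℕ) : ℝ := ∏ i ∈ Finset.range n, (a + i)

/-- The Kummer confluent hypergeometric function ₁F₁(a;c;x). -/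
noncomputable def oneFone (a c x : ℝ) : ℝ :=
  ∑' k : ℕ, poch a k * x ^ k / (poch c k * k.factorial)

/-!
Put `u k = x ^ k / ((c)_k k!)`, so that `₁F₁(t;c;x) = ∑ (t)_k u k` and
`Γ(t) ₁F₁(t;c;x) = ∑ Γ(t + k) u k`. Both inequalities compare two Cauchy products of series with
nonnegative terms coefficient by coefficient, with strict inequality at one coefficient.

Lower bound: pairing `k` with `n - k`, the `n`-th coefficients compare through the majorization
inequality for `w ↦ Γ(w) Γ(S - w)`, which is convex because `log Γ` is (Bohr–Mollerup). The
constant coefficients differ strictly.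

Upper bound: up to the factor `x ^ n / n!`, the `n`-th coefficient of
`₁F₁(a+δ) ₁F₁(b) - ₁F₁(b+δ) ₁F₁(a)` is `∑ C(n,k) h k ((a+δ)_k (b)_{n-k} - (b+δ)_k (a)_{n-k})` with
`h k = 1 / ((c)_k (c)_{n-k})`. Without the weights `h k` this vanishes by Chu–Vandermonde. After
symmetrizing in `k ↔ n - k`, both the weights and the ratio of the symmetrized Pochhammer products
increase towards the middle index, so Chebyshev's sum inequality makes the weighted sum
nonnegative. The coefficient of `x ^ 2` is strictly positive.
-/

open Finset Real

section Pochhammer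

variable {a b : ℝ}

lemma poch_zero (a : ℝ) : poch a 0 = 1 := prod_range_zero _

lemma poch_succ (a : ℝ) (n : ℕ) : poch a (n + 1) = poch a n * (a + n) := prod_range_succ _ _

lemma poch_add (a : ℝ) (m n : ℕ) : poch a (m + n) = poch a m * poch (a + m) n := by
  simp only [poch, prod_range_add, Nat.cast_add, add_assoc]

lemma poch_pos (ha : 0 < a) (n : ℕ) : 0 < poch a n := prod_pos fun _ _ => by positivity

lemma poch_le_poch (ha : 0 ≤ a) (hab : a ≤ b) (n : ℕ) : poch a n ≤ poch b n :=
  prod_le_prod (fun _ _ => by positivity) fun _ _ => by linarith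

theorem sum_antidiagonal_choose_mul_poch (p q : ℝ) (n : ℕ) :
    ∑ ij ∈ antidiagonal n, (n.choose ij.1 : ℝ) * (poch p ij.1 * poch q ij.2) = poch (p + q) n := by
  induction n with
  | zero => simp [poch_zero]
  | succ n ih =>
    rw [Finset.sum_antidiagonal_choose_succ_mul (fun i j => poch p i * poch q j), ← sum_add_distrib,
      poch_succ, ← ih, sum_mul]
    refine sum_congr rfl fun ij hij => ?_
    rw [HasAntidiagonal.mem_antidiagonal] at hij
    rw [← Nat.choose_symm_of_eq_add hij.symm, poch_succ, poch_succ, ← hij]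
    push_cast
    ring

theorem sum_range_choose_mul_poch (p q : ℝ) (n : ℕ) :
    ∑ k ∈ range (n + 1), (n.choose k : ℝ) * (poch p k * poch q (n - k)) = poch (p + q) n := by
  rw [← sum_antidiagonal_choose_mul_poch, Nat.sum_antidiagonal_eq_sum_range_succ_mk]

lemma Gamma_add_nat_eq_mul_poch {t : ℝ} (ht : 0 < t) (k : ℕ) :
    Gamma (t + k) = Gamma t * poch t k := by
  induction k with
  | zero => simp [poch_zero]
  | succ k ih =>
    rw [Nat.cast_succ, ← add_assoc, Gamma_add_one (by positivity), ih, poch_succ]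
    ring

end Pochhammer

theorem sum_range_add_reflect (φ : ℕ → ℝ) (n : ℕ) :
    ∑ k ∈ range (n + 1), (φ k + φ (n - k)) = 2 * ∑ k ∈ range (n + 1), φ k := by
  rw [sum_add_distrib, ← sum_range_reflect φ (n + 1)]
  simp only [add_tsub_cancel_right]
  ring

theorem ConvexOn.add_le_add_of_mem_Icc {s : Set ℝ} {f : ℝ → ℝ} (hf : ConvexOn ℝ s f)
    {p q p' q' : ℝ} (hp : p ∈ s) (hq : q ∈ s) (hpp' : p ≤ p') (hp'q : p' ≤ q)
    (hsum : p' + q' = p + q) : f p' + f q' ≤ f p + f q := by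
  rcases hpp'.eq_or_lt with rfl | hlt
  · obtain rfl : q' = q := by linarith
    rfl
  set t := (q - p') / (q - p)
  have hqp : 0 < q - p := by linarith
  have ht₀ : 0 ≤ t := div_nonneg (by linarith) hqp.le
  have ht₁ : t ≤ 1 := (div_le_one hqp).2 (by linarith)
  have hp' : t * p + (1 - t) * q = p' := by simp only [t]; field_simp; ring
  have hq' : (1 - t) * p + t * q = q' := by linarith
  have h₁ := hf.2 hp hq ht₀ (sub_nonneg.2 ht₁) (by ring)
  have h₂ := hf.2 hp hq (sub_nonneg.2 ht₁) ht₀ (by ring)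
  simp only [smul_eq_mul, hp', hq'] at h₁ h₂
  linarith

theorem ConvexOn.exp {s : Set ℝ} {f : ℝ → ℝ} (hf : ConvexOn ℝ s f) :
    ConvexOn ℝ s fun x => exp (f x) :=
  ⟨hf.1, fun _ hx _ hy _ _ ha hb hab =>
    (exp_le_exp.2 (hf.2 hx hy ha hb hab)).trans (convexOn_exp.2 trivial trivial ha hb hab)⟩

theorem convexOn_Gamma_mul_Gamma_sub (S : ℝ) :
    ConvexOn ℝ (Set.Ioo 0 S) fun w => Gamma w * Gamma (S - w) := by
  have hlog : ConvexOn ℝ (Set.Ioo 0 S) fun w => log (Gamma w) + log (Gamma (S - w)) := by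
    refine (convexOn_log_Gamma.subset Set.Ioo_subset_Ioi_self (convex_Ioo 0 S)).add ?_
    have := convexOn_log_Gamma.comp_affineMap (AffineMap.const ℝ ℝ S - AffineMap.id ℝ ℝ)
    refine this.subset (fun w hw => ?_) (convex_Ioo 0 S)
    simp [hw.2]
  refine hlog.exp.congr fun w hw => ?_
  have hSw : 0 < S - w := sub_pos.2 hw.2
  simp only [exp_add, exp_log (Gamma_pos_of_pos hw.1), exp_log (Gamma_pos_of_pos hSw)]

section GammaProducts

variable {p q p' q' : ℝ}

theorem Gamma_mul_Gamma_le_of_mem_Icc (hp : 0 < p) (hpp' : p ≤ p') (hp'q : p' ≤ q)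
    (hsum : p' + q' = p + q) : Gamma p' * Gamma q' ≤ Gamma p * Gamma q := by
  have h := (convexOn_Gamma_mul_Gamma_sub (p + q)).add_le_add_of_mem_Icc
    ⟨hp, by linarith⟩ ⟨by linarith, by linarith⟩ hpp' hp'q hsum
  simp only [show p + q - p' = q' by linarith, show p + q - q' = p' by linarith,
    add_sub_cancel_left, add_sub_cancel_right] at h
  linarith [mul_comm (Gamma p') (Gamma q'), mul_comm (Gamma p) (Gamma q)]

/-- Strictness comes from the non-strict inequality at `p + 1, q + 1, p' + 1, q' + 1`,
since `Γ (t + 1) = t Γ t` and `p q < p' q'`. -/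
theorem Gamma_mul_Gamma_lt_of_mem_Ioo (hp : 0 < p) (hpp' : p < p') (hp'q : p' < q)
    (hsum : p' + q' = p + q) : Gamma p' * Gamma q' < Gamma p * Gamma q := by
  have hp' : 0 < p' := hp.trans hpp'
  have hq' : 0 < q' := by linarith
  have hq : 0 < q := by linarith
  have h := Gamma_mul_Gamma_le_of_mem_Icc (p := p + 1) (q := q + 1) (p' := p' + 1) (q' := q' + 1)
    (by linarith) (by linarith) (by linarith) (by linarith)
  rw [Gamma_add_one hp.ne', Gamma_add_one hq.ne', Gamma_add_one hp'.ne',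
    Gamma_add_one hq'.ne'] at h
  have hpq : p * q < p' * q' := by nlinarith
  have hΓ : 0 < Gamma p * Gamma q := mul_pos (Gamma_pos_of_pos hp) (Gamma_pos_of_pos hq)
  refine lt_of_mul_lt_mul_left ?_ (mul_pos hp' hq').le
  calc p' * q' * (Gamma p' * Gamma q') = p' * Gamma p' * (q' * Gamma q') := by ring
    _ ≤ p * Gamma p * (q * Gamma q) := h
    _ = p * q * (Gamma p * Gamma q) := by ring
    _ < p' * q' * (Gamma p * Gamma q) := mul_lt_mul_of_pos_right hpq hΓ

/-- Majorization for the convex function `w ↦ Γ w Γ (S - w)` with `S = a + b + δ + i + j`. -/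
theorem Gamma_mul_Gamma_add_le {a b δ : ℝ} (ha : 0 < a) (hab : a ≤ b) (hδ : 0 ≤ δ) (i j : ℕ) :
    Gamma (a + δ + i) * Gamma (b + j) + Gamma (a + δ + j) * Gamma (b + i) ≤
      Gamma (a + i) * Gamma (b + δ + j) + Gamma (a + j) * Gamma (b + δ + i) := by
  have hi : (0 : ℝ) ≤ i := i.cast_nonneg
  have hj : (0 : ℝ) ≤ j := j.cast_nonneg
  set S := a + b + δ + i + j
  have h := (convexOn_Gamma_mul_Gamma_sub S).add_le_add_of_mem_Icc (p := a + i) (q := b + δ + i)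
    (p' := a + δ + i) (q' := b + i) ⟨by linarith, by simp only [S]; linarith⟩
    ⟨by linarith, by simp only [S]; linarith⟩ (by linarith) (by linarith) (by ring)
  simp only [show S - (a + δ + i) = b + j by ring, show S - (b + i) = a + δ + j by ring,
    show S - (a + i) = b + δ + j by ring, show S - (b + δ + i) = a + j by ring] at h
  linarith [mul_comm (Gamma (b + i)) (Gamma (a + δ + j)),
    mul_comm (Gamma (b + δ + i)) (Gamma (a + j))]

end GammaProducts

theorem MonovaryOn.sum_mul_sum_le_sum_mul_sum {ι : Type*} {s : Finset ι} {w f g : ι → ℝ}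
    (hw : ∀ i ∈ s, 0 ≤ w i) (hfg : MonovaryOn f g s) :
    (∑ i ∈ s, w i * f i) * ∑ i ∈ s, w i * g i ≤ (∑ i ∈ s, w i) * ∑ i ∈ s, w i * (f i * g i) := by
  have h : 0 ≤ ∑ i ∈ s, ∑ j ∈ s, w i * w j * ((f i - f j) * (g i - g j)) :=
    sum_nonneg fun i hi => sum_nonneg fun j hj =>
      mul_nonneg (mul_nonneg (hw i hi) (hw j hj)) (hfg.sub_mul_sub_nonneg hj hi)
  have expand : ∑ i ∈ s, ∑ j ∈ s, w i * w j * ((f i - f j) * (g i - g j)) =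
      2 * ((∑ i ∈ s, w i) * ∑ i ∈ s, w i * (f i * g i) -
        (∑ i ∈ s, w i * f i) * ∑ i ∈ s, w i * g i) := by
    simp only [mul_sub, sub_mul, sum_sub_distrib, sum_mul_sum]
    rw [sum_comm (f := fun i j => w i * w j * (f i * g i)),
      sum_comm (f := fun i j => w i * w j * (f j * g i))]
    simp only [mul_sum, ← sum_sub_distrib]
    exact sum_congr rfl fun i _ => sum_congr rfl fun j _ => by ring
  linarith

/-- Both functions factor through `k ↦ min k (n - k)`, on which they are monotone. -/
theorem monovaryOn_range_of_symm {n : ℕ} {f g : ℕ → ℝ}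
    (hf : ∀ k ≤ n, f (n - k) = f k) (hg : ∀ k ≤ n, g (n - k) = g k)
    (hf' : ∀ i, 2 * (i + 1) ≤ n → f i ≤ f (i + 1)) (hg' : ∀ i, 2 * (i + 1) ≤ n → g i ≤ g (i + 1)) :
    MonovaryOn f g (range (n + 1)) := by
  have mono : ∀ {φ : ℕ → ℝ}, (∀ i, 2 * (i + 1) ≤ n → φ i ≤ φ (i + 1)) →
      ∀ i j, i ≤ j → 2 * j ≤ n → φ i ≤ φ j := by
    intro φ hφ i j hij hj
    induction j, hij using Nat.le_induction with
    | base => rfl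
    | succ j _ ih => exact (ih (by omega)).trans (hφ j hj)
  have fold : ∀ {φ : ℕ → ℝ}, (∀ k ≤ n, φ (n - k) = φ k) → ∀ k ≤ n, φ k = φ (min k (n - k)) := by
    intro φ hφ k hk
    rcases le_total k (n - k) with h | h
    · rw [min_eq_left h]
    · rw [min_eq_right h, hφ k hk]
  intro i hi j hj hlt
  rw [mem_coe, mem_range] at hi hj
  rw [fold hg i (by omega), fold hg j (by omega)] at hlt
  rw [fold hf i (by omega), fold hf j (by omega)]
  refine mono hf' _ _ ?_ (by omega)
  by_contra! h
  exact hlt.not_ge (mono hg' _ _ h.le (by omega))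

section PochSymm

def pochSymm (p q : ℝ) (n k : ℕ) : ℝ := poch p k * poch q (n - k) + poch p (n - k) * poch q k

variable {p q P Q P' Q' : ℝ}

lemma poch_succ_eq_mul (a : ℝ) (n : ℕ) : poch a (n + 1) = a * poch (a + 1) n := by
  rw [add_comm, poch_add]
  simp [poch]

lemma pochSymm_pos (hp : 0 < p) (hq : 0 < q) (n k : ℕ) : 0 < pochSymm p q n k :=
  add_pos (mul_pos (poch_pos hp _) (poch_pos hq _)) (mul_pos (poch_pos hp _) (poch_pos hq _))

lemma pochSymm_sub_self (p q : ℝ) {n k : ℕ} (hk : k ≤ n) :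
    pochSymm p q n (n - k) = pochSymm p q n k := by
  simp only [pochSymm, Nat.sub_sub_self hk]
  ring

lemma sum_range_choose_mul_pochSymm (p q : ℝ) (n : ℕ) :
    ∑ k ∈ range (n + 1), (n.choose k : ℝ) * pochSymm p q n k = 2 * poch (p + q) n := by
  have h : ∑ k ∈ range (n + 1), (n.choose k : ℝ) * (poch p (n - k) * poch q k) =
      poch (p + q) n := by
    rw [add_comm p q, ← sum_range_choose_mul_poch q p n]
    simp only [mul_comm (poch p _)]
  simp only [pochSymm, mul_add, sum_add_distrib, sum_range_choose_mul_poch, h]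
  ring

lemma pochSymm_add_two_mul (p q : ℝ) {n k : ℕ} (hk : k ≤ n) (i : ℕ) :
    pochSymm p q (n + 2 * i) (k + i) = poch p i * poch q i * pochSymm (p + i) (q + i) n k := by
  have h : n + 2 * i - (k + i) = i + (n - k) := by omega
  rw [pochSymm, pochSymm, h, add_comm k i]
  simp only [poch_add]
  ring

lemma pochSymm_zero_eq (p q : ℝ) (r : ℕ) :
    pochSymm p q (r + 2) 0 =
      p * poch (p + 1) r * (p + (r + 1)) + q * poch (q + 1) r * (q + (r + 1)) := by
  simp only [pochSymm, Nat.sub_zero, poch_zero, poch_succ _ (r + 1), poch_succ_eq_mul]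
  push_cast
  ring

lemma pochSymm_one_eq (p q : ℝ) (r : ℕ) :
    pochSymm p q (r + 2) 1 = p * q * (poch (p + 1) r + poch (q + 1) r) := by
  simp only [pochSymm, show r + 2 - 1 = r + 1 by omega, poch_succ_eq_mul, poch_zero]
  ring

/-- With `A = P x`, `B = Q y` (and primed analogues) the difference of the two sides is
`(P + Q + ρ) / 2 * ((A + B) (P' - Q') (A' - B') - (A' + B') (P - Q) (A - B))`. -/
theorem weighted_ratio_le_of_spread (hQ' : 0 < Q') (hQ'P : Q' ≤ P) (hQ'Q : Q' ≤ Q)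
    (hsum : P + Q = P' + Q') {x y x' y' ρ : ℝ} (hy' : 0 ≤ y')
    (hxx' : x ≤ x') (hyx' : y ≤ x') (hy'x : y' ≤ x) (hy'y : y' ≤ y) (hρ : 0 ≤ ρ) :
    P' * Q' * (x' + y') * (P * x * (P + ρ) + Q * y * (Q + ρ)) ≤
      (P' * x' * (P' + ρ) + Q' * y' * (Q' + ρ)) * (P * Q * (x + y)) := by
  have hPP' : P ≤ P' := by linarith
  have hQP' : Q ≤ P' := by linarith
  have hP : 0 < P := hQ'.trans_le hQ'P
  have hQ : 0 < Q := hQ'.trans_le hQ'Q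
  have hP' : 0 < P' := hQ.trans_le hQP'
  have hx : 0 ≤ x := hy'.trans hy'x
  have hy : 0 ≤ y := hy'.trans hy'y
  have hA' : 0 ≤ P' * x' := mul_nonneg hP'.le (hx.trans hxx')
  have hB' : 0 ≤ Q' * y' := mul_nonneg hQ'.le hy'
  have hAB : P * x * (Q' * y') ≤ P' * x' * (Q * y) := by gcongr
  have hBA : Q * y * (Q' * y') ≤ P * x * (P' * x') := by
    calc Q * y * (Q' * y') ≤ P' * x' * (P * x) := by gcongr
      _ = P * x * (P' * x') := mul_comm _ _
  have hspread : (P' * x' + Q' * y') * |P * x - Q * y| ≤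
      (P * x + Q * y) * (P' * x' - Q' * y') := by
    rcases abs_cases (P * x - Q * y) with ⟨h, -⟩ | ⟨h, -⟩ <;> rw [h] <;> nlinarith
  have hd : |P - Q| ≤ P' - Q' := abs_sub_le_iff.2 ⟨by linarith, by linarith⟩
  have key : (P' * x' + Q' * y') * ((P - Q) * (P * x - Q * y)) ≤
      (P * x + Q * y) * ((P' - Q') * (P' * x' - Q' * y')) :=
    calc (P' * x' + Q' * y') * ((P - Q) * (P * x - Q * y))
        ≤ (P' * x' + Q' * y') * (|P - Q| * |P * x - Q * y|) := by
          rw [← abs_mul]; exact mul_le_mul_of_nonneg_left (le_abs_self _) (by positivity)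
      _ ≤ (P' * x' + Q' * y') * ((P' - Q') * |P * x - Q * y|) := by gcongr
      _ = (P' - Q') * ((P' * x' + Q' * y') * |P * x - Q * y|) := by ring
      _ ≤ (P' - Q') * ((P * x + Q * y) * (P' * x' - Q' * y')) := by
          gcongr; linarith
      _ = (P * x + Q * y) * ((P' - Q') * (P' * x' - Q' * y')) := by ring
  obtain rfl : P' = P + Q - Q' := by linarith
  linear_combination ((P + Q + ρ) / 2) * key

end PochSymm

section Spread

variable {P Q P' Q' : ℝ} (hQ' : 0 < Q') (hQ'P : Q' ≤ P) (hQ'Q : Q' ≤ Q) (hsum : P + Q = P' + Q')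
include hQ' hQ'P hQ'Q hsum

lemma pochSymm_one_mul_pochSymm_zero_le (r : ℕ) :
    pochSymm P' Q' (r + 2) 1 * pochSymm P Q (r + 2) 0 ≤
      pochSymm P' Q' (r + 2) 0 * pochSymm P Q (r + 2) 1 := by
  rw [pochSymm_zero_eq, pochSymm_zero_eq, pochSymm_one_eq, pochSymm_one_eq]
  exact weighted_ratio_le_of_spread hQ' hQ'P hQ'Q hsum
    (poch_pos (by linarith) r).le (poch_le_poch (by linarith) (by linarith) r)
    (poch_le_poch (by linarith) (by linarith) r) (poch_le_poch (by linarith) (by linarith) r)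
    (poch_le_poch (by linarith) (by linarith) r) (by positivity)

lemma pochSymm_succ_mul_pochSymm_le {n i : ℕ} (hi : 2 * (i + 1) ≤ n) :
    pochSymm P' Q' n (i + 1) * pochSymm P Q n i ≤ pochSymm P' Q' n i * pochSymm P Q n (i + 1) := by
  obtain ⟨r, rfl⟩ : ∃ r, n = r + 2 + 2 * i := ⟨n - 2 * (i + 1), by omega⟩
  have e₀ : ∀ p q : ℝ, pochSymm p q (r + 2 + 2 * i) i =
      poch p i * poch q i * pochSymm (p + i) (q + i) (r + 2) 0 := fun p q => by
    simpa using pochSymm_add_two_mul p q (n := r + 2) (k := 0) (by omega) i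
  have e₁ : ∀ p q : ℝ, pochSymm p q (r + 2 + 2 * i) (i + 1) =
      poch p i * poch q i * pochSymm (p + i) (q + i) (r + 2) 1 := fun p q => by
    rw [add_comm i 1]
    exact pochSymm_add_two_mul p q (by omega) i
  have hi : (0 : ℝ) ≤ i := i.cast_nonneg
  have base := pochSymm_one_mul_pochSymm_zero_le (P := P + i) (Q := Q + i) (P' := P' + i)
    (Q' := Q' + i) (by linarith) (by linarith) (by linarith) (by linarith) r
  have hc : 0 ≤ poch P' i * poch Q' i * (poch P i * poch Q i) := by
    have := poch_pos (show 0 < P by linarith) i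
    have := poch_pos (show 0 < Q by linarith) i
    have := poch_pos (show 0 < P' by linarith) i
    have := poch_pos hQ' i
    positivity
  rw [e₀, e₀, e₁, e₁]
  calc _ = poch P' i * poch Q' i * (poch P i * poch Q i) *
        (pochSymm (P' + i) (Q' + i) (r + 2) 1 * pochSymm (P + i) (Q + i) (r + 2) 0) := by ring
    _ ≤ poch P' i * poch Q' i * (poch P i * poch Q i) *
        (pochSymm (P' + i) (Q' + i) (r + 2) 0 * pochSymm (P + i) (Q + i) (r + 2) 1) :=
      mul_le_mul_of_nonneg_left base hc
    _ = _ := by ring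

theorem sum_choose_mul_pochSymm_le {n : ℕ} {h : ℕ → ℝ} (h_symm : ∀ k ≤ n, h (n - k) = h k)
    (h_mono : ∀ i, 2 * (i + 1) ≤ n → h i ≤ h (i + 1)) :
    ∑ k ∈ range (n + 1), n.choose k * h k * pochSymm P' Q' n k ≤
      ∑ k ∈ range (n + 1), n.choose k * h k * pochSymm P Q n k := by
  have hpos : ∀ k, 0 < pochSymm P' Q' n k := pochSymm_pos (by linarith) hQ' n
  set w : ℕ → ℝ := fun k => n.choose k * pochSymm P' Q' n k
  set g : ℕ → ℝ := fun k => pochSymm P Q n k / pochSymm P' Q' n k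
  have hwg : ∀ k, w k * g k = n.choose k * pochSymm P Q n k := fun k => by
    simp only [w, g]
    field_simp [(hpos k).ne']
  have hg_symm : ∀ k ≤ n, g (n - k) = g k := fun k hk => by
    simp only [g, pochSymm_sub_self _ _ hk]
  have hg_mono : ∀ i, 2 * (i + 1) ≤ n → g i ≤ g (i + 1) := fun i hi => by
    rw [div_le_div_iff₀ (hpos i) (hpos (i + 1))]
    linarith [pochSymm_succ_mul_pochSymm_le hQ' hQ'P hQ'Q hsum hi]
  have hcheb := (monovaryOn_range_of_symm h_symm hg_symm h_mono hg_mono).sum_mul_sum_le_sum_mul_sum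
    (w := w) fun k _ => mul_nonneg (Nat.cast_nonneg _) (hpos k).le
  have hwg_sum : ∑ k ∈ range (n + 1), w k * g k = ∑ k ∈ range (n + 1), w k := by
    simp only [hwg, w, sum_range_choose_mul_pochSymm, hsum]
  have hw_pos : 0 < ∑ k ∈ range (n + 1), w k :=
    sum_pos (fun k hk => mul_pos (Nat.cast_pos.2 (Nat.choose_pos (Nat.lt_succ_iff.1
      (mem_range.1 hk)))) (hpos k)) nonempty_range_add_one
  rw [hwg_sum, mul_comm] at hcheb
  calc ∑ k ∈ range (n + 1), n.choose k * h k * pochSymm P' Q' n k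
      = ∑ k ∈ range (n + 1), w k * h k := sum_congr rfl fun k _ => by simp only [w]; ring
    _ ≤ ∑ k ∈ range (n + 1), w k * (h k * g k) := le_of_mul_le_mul_left hcheb hw_pos
    _ = ∑ k ∈ range (n + 1), n.choose k * h k * pochSymm P Q n k :=
      sum_congr rfl fun k _ => by rw [mul_left_comm, hwg]; ring

end Spread

theorem tsum_mul_tsum_lt_of_sum_range_le {f g f' g' : ℕ → ℝ} (hf : ∀ k, 0 ≤ f k)
    (hg : ∀ k, 0 ≤ g k) (hf' : ∀ k, 0 ≤ f' k) (hg' : ∀ k, 0 ≤ g' k) (hfs : Summable f)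
    (hgs : Summable g) (hfs' : Summable f') (hgs' : Summable g')
    (hle : ∀ n, ∑ k ∈ range (n + 1), f k * g (n - k) ≤ ∑ k ∈ range (n + 1), f' k * g' (n - k))
    {m : ℕ} (hlt : ∑ k ∈ range (m + 1), f k * g (m - k) < ∑ k ∈ range (m + 1), f' k * g' (m - k)) :
    (∑' k, f k) * ∑' k, g k < (∑' k, f' k) * ∑' k, g' k := by
  have hnorm : ∀ {u : ℕ → ℝ}, (∀ k, 0 ≤ u k) → Summable u → Summable fun k => ‖u k‖ :=
    fun hu hus => hus.congr fun k => (norm_of_nonneg (hu k)).symm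
  exact hasSum_lt hle hlt (hasSum_sum_range_mul_of_summable_norm (hnorm hf hfs) (hnorm hg hgs))
    (hasSum_sum_range_mul_of_summable_norm (hnorm hf' hfs') (hnorm hg' hgs'))

section Kummer

noncomputable def kummerWeight (c x : ℝ) (k : ℕ) : ℝ := x ^ k / (poch c k * k.factorial)

variable {c t x : ℝ}

lemma kummerWeight_nonneg (hc : 0 < c) (hx : 0 ≤ x) (k : ℕ) : 0 ≤ kummerWeight c x k := by
  have := poch_pos hc k
  unfold kummerWeight
  positivity

lemma kummerWeight_zero (c x : ℝ) : kummerWeight c x 0 = 1 := by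
  simp [kummerWeight, poch_zero]

lemma poch_mul_kummerWeight_succ (hc : 0 < c) (k : ℕ) :
    poch t (k + 1) * kummerWeight c x (k + 1) =
      poch t k * kummerWeight c x k * ((t + k) * x / ((c + k) * (k + 1))) := by
  have := poch_pos hc k
  simp only [kummerWeight, poch_succ, pow_succ, Nat.factorial_succ]
  push_cast
  field_simp

lemma summable_poch_mul_kummerWeight (ht : 0 < t) (hc : 0 < c) (hx : 0 ≤ x) :
    Summable fun k => poch t k * kummerWeight c x k := by
  refine summable_of_ratio_norm_eventually_le (r := 1 / 2) (by norm_num) ?_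
  filter_upwards [Filter.eventually_ge_atTop (⌈t⌉₊ + ⌈4 * x⌉₊)] with k hk
  have hkt : t ≤ k := (Nat.le_ceil t).trans (by exact_mod_cast (Nat.le_add_right _ _).trans hk)
  have hkx : 4 * x ≤ k := (Nat.le_ceil _).trans (by exact_mod_cast (Nat.le_add_left _ _).trans hk)
  have hterm : ∀ k, 0 ≤ poch t k * kummerWeight c x k :=
    fun k => mul_nonneg (poch_pos ht k).le (kummerWeight_nonneg hc hx k)
  have hratio : (t + k) * x / ((c + k) * (k + 1)) ≤ 1 / 2 := by
    rw [div_le_iff₀ (by positivity)]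
    nlinarith
  rw [norm_of_nonneg (hterm _), norm_of_nonneg (hterm _), poch_mul_kummerWeight_succ hc,
    mul_comm _ (poch t k * _)]
  exact mul_le_mul_of_nonneg_left hratio (hterm k)

lemma oneFone_eq_tsum (t c x : ℝ) : oneFone t c x = ∑' k, poch t k * kummerWeight c x k := by
  simp only [oneFone, kummerWeight, mul_div_assoc]

lemma oneFone_pos (ht : 0 < t) (hc : 0 < c) (hx : 0 ≤ x) : 0 < oneFone t c x := by
  rw [oneFone_eq_tsum]
  exact (summable_poch_mul_kummerWeight ht hc hx).tsum_pos
    (fun k => mul_nonneg (poch_pos ht k).le (kummerWeight_nonneg hc hx k)) 0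
    (by simp [poch_zero, kummerWeight_zero])

lemma Gamma_mul_oneFone (ht : 0 < t) (c x : ℝ) :
    Gamma t * oneFone t c x = ∑' k : ℕ, Gamma (t + k) * kummerWeight c x k := by
  simp only [oneFone_eq_tsum, ← tsum_mul_left, Gamma_add_nat_eq_mul_poch ht, mul_assoc]

lemma summable_Gamma_mul_kummerWeight (ht : 0 < t) (hc : 0 < c) (hx : 0 ≤ x) :
    Summable fun k : ℕ => Gamma (t + k) * kummerWeight c x k := by
  simpa only [Gamma_add_nat_eq_mul_poch ht, mul_assoc] using
    (summable_poch_mul_kummerWeight ht hc hx).mul_left (Gamma t)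

lemma kummerWeight_mul_kummerWeight (hc : 0 < c) (x : ℝ) {n k : ℕ} (hk : k ≤ n) :
    kummerWeight c x k * kummerWeight c x (n - k) =
      x ^ n / n.factorial * (n.choose k * (poch c k * poch c (n - k))⁻¹) := by
  have hfact : (n.choose k * k.factorial * (n - k).factorial : ℝ) = n.factorial := by
    exact_mod_cast Nat.choose_mul_factorial_mul_factorial hk
  have := poch_pos hc k
  have := poch_pos hc (n - k)
  have hchoose : (0 : ℝ) < n.choose k := Nat.cast_pos.2 (Nat.choose_pos hk)
  have hpow : x ^ n = x ^ k * x ^ (n - k) := by rw [← pow_add, Nat.add_sub_cancel' hk]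
  rw [kummerWeight, kummerWeight, ← hfact, hpow]
  field_simp

end Kummer

section Coefficients

variable {a b c x δ : ℝ}

lemma inv_poch_mul_poch_sub_le (hc : 0 < c) {n i : ℕ} (hi : 2 * (i + 1) ≤ n) :
    (poch c i * poch c (n - i))⁻¹ ≤ (poch c (i + 1) * poch c (n - (i + 1)))⁻¹ := by
  have hle : (i : ℝ) ≤ (n - (i + 1) : ℕ) := by exact_mod_cast (by omega : i ≤ n - (i + 1))
  have := poch_pos hc i
  have := poch_pos hc (n - (i + 1))
  rw [show n - i = n - (i + 1) + 1 by omega, poch_succ c (n - (i + 1)), poch_succ c i]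
  refine inv_anti₀ (by positivity) ?_
  calc poch c i * (c + i) * poch c (n - (i + 1))
      = poch c i * poch c (n - (i + 1)) * (c + i) := by ring
    _ ≤ poch c i * poch c (n - (i + 1)) * (c + (n - (i + 1) : ℕ)) := by gcongr
    _ = _ := by ring

lemma sum_range_poch_mul_kummerWeight (hc : 0 < c) (p q x : ℝ) (n : ℕ) :
    ∑ k ∈ range (n + 1),
        poch p k * kummerWeight c x k * (poch q (n - k) * kummerWeight c x (n - k)) =
      x ^ n / n.factorial / 2 *
        ∑ k ∈ range (n + 1), n.choose k * (poch c k * poch c (n - k))⁻¹ * pochSymm p q n k := by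
  set ψ : ℕ → ℝ := fun k =>
    n.choose k * (poch c k * poch c (n - k))⁻¹ * (poch p k * poch q (n - k))
  have hterm : ∀ k ∈ range (n + 1),
      poch p k * kummerWeight c x k * (poch q (n - k) * kummerWeight c x (n - k)) =
        x ^ n / n.factorial * ψ k := fun k hk => by
    rw [mul_mul_mul_comm, kummerWeight_mul_kummerWeight hc x (Nat.lt_succ_iff.1 (mem_range.1 hk))]
    ring
  have hsymm : ∀ k ∈ range (n + 1),
      (n.choose k : ℝ) * (poch c k * poch c (n - k))⁻¹ * pochSymm p q n k = ψ k + ψ (n - k) :=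
    fun k hk => by
      have hk : k ≤ n := Nat.lt_succ_iff.1 (mem_range.1 hk)
      simp only [ψ, pochSymm, Nat.sub_sub_self hk, Nat.choose_symm hk]
      ring
  rw [sum_congr rfl hterm, sum_congr rfl hsymm, sum_range_add_reflect, ← mul_sum]
  ring

lemma sum_range_kummer_coeff_le (ha : 0 < a) (hab : a ≤ b) (hδ : 0 ≤ δ) (hc : 0 < c)
    (hx : 0 ≤ x) (n : ℕ) :
    ∑ k ∈ range (n + 1),
        poch (b + δ) k * kummerWeight c x k * (poch a (n - k) * kummerWeight c x (n - k)) ≤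
      ∑ k ∈ range (n + 1),
        poch (a + δ) k * kummerWeight c x k * (poch b (n - k) * kummerWeight c x (n - k)) := by
  rw [sum_range_poch_mul_kummerWeight hc, sum_range_poch_mul_kummerWeight hc]
  refine mul_le_mul_of_nonneg_left (sum_choose_mul_pochSymm_le ha (by linarith) hab (by ring)
    (fun k hk => ?_) fun i hi => ?_) (by positivity)
  · simp only [Nat.sub_sub_self hk, mul_comm]
  · exact inv_poch_mul_poch_sub_le hc hi

lemma sum_range_kummer_coeff_two_lt (hab : a < b) (hδ : 0 < δ) (hc : 0 < c) (hx : 0 < x) :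
    ∑ k ∈ range (2 + 1),
        poch (b + δ) k * kummerWeight c x k * (poch a (2 - k) * kummerWeight c x (2 - k)) <
      ∑ k ∈ range (2 + 1),
        poch (a + δ) k * kummerWeight c x k * (poch b (2 - k) * kummerWeight c x (2 - k)) := by
  have key : ∑ k ∈ range (2 + 1),
        poch (a + δ) k * kummerWeight c x k * (poch b (2 - k) * kummerWeight c x (2 - k)) -
      ∑ k ∈ range (2 + 1),
        poch (b + δ) k * kummerWeight c x k * (poch a (2 - k) * kummerWeight c x (2 - k)) =
      δ * (b - a) * x ^ 2 / (c ^ 2 * (c + 1)) := by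
    simp [sum_range_succ, prod_range_succ, poch, kummerWeight, Nat.factorial]
    field_simp
    ring
  have : 0 < δ * (b - a) * x ^ 2 / (c ^ 2 * (c + 1)) := by
    have := sub_pos.2 hab
    positivity
  linarith

lemma sum_range_Gamma_coeff_le (ha : 0 < a) (hab : a ≤ b) (hδ : 0 ≤ δ) (hc : 0 < c)
    (hx : 0 ≤ x) (n : ℕ) :
    ∑ k ∈ range (n + 1), Gamma (a + δ + k) * kummerWeight c x k *
        (Gamma (b + (n - k : ℕ)) * kummerWeight c x (n - k)) ≤
      ∑ k ∈ range (n + 1), Gamma (a + k) * kummerWeight c x k *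
        (Gamma (b + δ + (n - k : ℕ)) * kummerWeight c x (n - k)) := by
  rw [← sub_nonneg, ← sum_sub_distrib]
  set D : ℕ → ℝ := fun k =>
    Gamma (a + k) * kummerWeight c x k * (Gamma (b + δ + (n - k : ℕ)) * kummerWeight c x (n - k)) -
      Gamma (a + δ + k) * kummerWeight c x k * (Gamma (b + (n - k : ℕ)) * kummerWeight c x (n - k))
  have hpair : ∀ k ∈ range (n + 1), 0 ≤ D k + D (n - k) := fun k hk => by
    have hk : k ≤ n := Nat.lt_succ_iff.1 (mem_range.1 hk)
    have hw := mul_nonneg (kummerWeight_nonneg hc hx k) (kummerWeight_nonneg hc hx (n - k))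
    have hΓ := Gamma_mul_Gamma_add_le ha hab hδ k (n - k)
    have hD : D k + D (n - k) = kummerWeight c x k * kummerWeight c x (n - k) *
        (Gamma (a + k) * Gamma (b + δ + (n - k : ℕ)) + Gamma (a + (n - k : ℕ)) * Gamma (b + δ + k) -
          (Gamma (a + δ + k) * Gamma (b + (n - k : ℕ)) +
            Gamma (a + δ + (n - k : ℕ)) * Gamma (b + k))) := by
      simp only [D, Nat.sub_sub_self hk]
      ring
    rw [hD]
    exact mul_nonneg hw (sub_nonneg.2 hΓ)
  linarith [sum_nonneg hpair, sum_range_add_reflect D n]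

lemma sum_range_Gamma_coeff_zero_lt (ha : 0 < a) (hab : a < b) (hδ : 0 < δ) :
    ∑ k ∈ range (0 + 1), Gamma (a + δ + k) * kummerWeight c x k *
        (Gamma (b + (0 - k : ℕ)) * kummerWeight c x (0 - k)) <
      ∑ k ∈ range (0 + 1), Gamma (a + k) * kummerWeight c x k *
        (Gamma (b + δ + (0 - k : ℕ)) * kummerWeight c x (0 - k)) := by
  simpa [kummerWeight_zero] using
    Gamma_mul_Gamma_lt_of_mem_Ioo ha (lt_add_of_pos_right a hδ) (by linarith) (by ring)

end Coefficients

section MainInequalities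

variable {a b c x δ : ℝ}

theorem oneFone_mul_oneFone_lt (ha : 0 < a) (hab : a < b) (hδ : 0 < δ) (hc : 0 < c)
    (hx : 0 < x) : oneFone (b + δ) c x * oneFone a c x < oneFone (a + δ) c x * oneFone b c x := by
  have hb : 0 < b := ha.trans hab
  have hterm : ∀ {t}, 0 < t → ∀ k, 0 ≤ poch t k * kummerWeight c x k :=
    fun ht k => mul_nonneg (poch_pos ht k).le (kummerWeight_nonneg hc hx.le k)
  have hsum : ∀ {t}, 0 < t → Summable fun k => poch t k * kummerWeight c x k :=
    fun ht => summable_poch_mul_kummerWeight ht hc hx.le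
  simp only [oneFone_eq_tsum]
  exact tsum_mul_tsum_lt_of_sum_range_le (hterm (by linarith)) (hterm ha) (hterm (by linarith))
    (hterm hb) (hsum (by linarith)) (hsum ha) (hsum (by linarith)) (hsum hb)
    (sum_range_kummer_coeff_le ha hab.le hδ.le hc hx.le)
    (sum_range_kummer_coeff_two_lt hab hδ hc hx)

theorem Gamma_mul_oneFone_mul_lt (ha : 0 < a) (hab : a < b) (hδ : 0 < δ) (hc : 0 < c)
    (hx : 0 ≤ x) :
    Gamma (a + δ) * oneFone (a + δ) c x * (Gamma b * oneFone b c x) <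
      Gamma a * oneFone a c x * (Gamma (b + δ) * oneFone (b + δ) c x) := by
  have hb : 0 < b := ha.trans hab
  have hterm : ∀ {t}, 0 < t → ∀ k : ℕ, 0 ≤ Gamma (t + k) * kummerWeight c x k :=
    fun ht k => mul_nonneg (Gamma_pos_of_pos (by positivity)).le (kummerWeight_nonneg hc hx k)
  have hsum : ∀ {t}, 0 < t → Summable fun k : ℕ => Gamma (t + k) * kummerWeight c x k :=
    fun ht => summable_Gamma_mul_kummerWeight ht hc hx
  rw [Gamma_mul_oneFone (by linarith), Gamma_mul_oneFone hb, Gamma_mul_oneFone ha,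
    Gamma_mul_oneFone (by linarith)]
  exact tsum_mul_tsum_lt_of_sum_range_le (hterm (by linarith)) (hterm hb) (hterm ha)
    (hterm (by linarith)) (hsum (by linarith)) (hsum hb) (hsum ha) (hsum (by linarith))
    (sum_range_Gamma_coeff_le ha hab.le hδ.le hc hx) (sum_range_Gamma_coeff_zero_lt ha hab hδ)

end MainInequalities

theorem stmt_19 (a b c δ x : ℝ) (ha : 0 < a) (hab : a < b) (hc : 0 < c)
    (hδ : 0 < δ) (hx : 0 < x) :
    Real.Gamma (a + δ) * Real.Gamma b / (Real.Gamma (b + δ) * Real.Gamma a) <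
      oneFone (b + δ) c x * oneFone a c x / (oneFone (a + δ) c x * oneFone b c x) ∧
    oneFone (b + δ) c x * oneFone a c x / (oneFone (a + δ) c x * oneFone b c x) < 1 := by
  have hb : 0 < b := ha.trans hab
  have hF : ∀ {t}, 0 < t → 0 < oneFone t c x := fun ht => oneFone_pos ht hc hx.le
  have hFF : 0 < oneFone (a + δ) c x * oneFone b c x := mul_pos (hF (by linarith)) (hF hb)
  have hΓΓ : 0 < Gamma (b + δ) * Gamma a :=
    mul_pos (Gamma_pos_of_pos (by linarith)) (Gamma_pos_of_pos ha)
  constructor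
  · rw [div_lt_div_iff₀ hΓΓ hFF]
    linarith [Gamma_mul_oneFone_mul_lt ha hab hδ hc hx.le]
  · rw [div_lt_one hFF]
    exact oneFone_mul_oneFone_lt ha hab hδ hc hx
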